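/- arXiv:2308.13357 — 5 statements merged into one kernel-verified Lean document; each statement's English description precedes it below -/
import Mathlib

section
/- If Ω ⊆ ℝ_b^X is totally bounded with respect to the sup-norm metric, then the pseudo-metric space X_Ω = (X, D_X^Ω) is totally bounded. -/
open scoped ENNReal

variable {X : Type*}

/-- A function is bounded. -/
def Bdd (f : X → ℝ) : Prop := ∃ C, ∀ x, |f x| ≤ C

/-- Extended sup-norm distance on functions. -/
noncomputable def supDist (f g : X → ℝ) : ℝ≥0∞ := ⨆ x, edist (f x) (g x)

/-- Pseudo-metric on X induced by a family Ω. -/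
noncomputable def DX (Ω : Set (X → ℝ)) (x y : X) : ℝ≥0∞ := ⨆ ω ∈ Ω, edist (ω x) (ω y)

noncomputable def pemX (Ω : Set (X → ℝ)) : PseudoEMetricSpace X where
  edist := DX Ω
  edist_self x := by simp [DX]
  edist_comm x y := by simp [DX, edist_comm]
  edist_triangle x y z := by
    refine iSup₂_le fun ω hω => ?_
    refine le_trans (edist_triangle (ω x) (ω y) (ω z)) (add_le_add ?_ ?_)
    · exact le_iSup₂ (f := fun ω (_ : ω ∈ Ω) => edist (ω x) (ω y)) ω hω
    · exact le_iSup₂ (f := fun ω (_ : ω ∈ Ω) => edist (ω y) (ω z)) ω hω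

noncomputable def DAut (Ω : Set (X → ℝ)) (s₁ s₂ : X ≃ X) : ℝ≥0∞ :=
  ⨆ ω ∈ Ω, supDist (ω ∘ s₁) (ω ∘ s₂)

noncomputable def pemAut (Ω : Set (X → ℝ)) : PseudoEMetricSpace (X ≃ X) where
  edist := DAut Ω
  edist_self s := by simp [DAut, supDist]
  edist_comm s t := by simp [DAut, supDist, edist_comm]
  edist_triangle r s t := by
    refine iSup₂_le fun ω hω => iSup_le fun x => ?_
    refine le_trans (edist_triangle (ω (r x)) (ω (s x)) (ω (t x))) (add_le_add ?_ ?_)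
    · exact le_trans (le_iSup (fun x => edist ((ω ∘ r) x) ((ω ∘ s) x)) x)
        (le_iSup₂ (f := fun ω (_ : ω ∈ Ω) => supDist (ω ∘ r) (ω ∘ s)) ω hω)
    · exact le_trans (le_iSup (fun x => edist ((ω ∘ s) x) ((ω ∘ t) x)) x)
        (le_iSup₂ (f := fun ω (_ : ω ∈ Ω) => supDist (ω ∘ s) (ω ∘ t)) ω hω)

def IsOperation (Φ Φ' : Set (X → ℝ)) (s : X ≃ X) : Prop := ∀ φ ∈ Φ, (φ ∘ s) ∈ Φ'


/-- Ω is totally bounded with respect to the sup-norm distance. -/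
def TotBddFns (Ω : Set (X → ℝ)) : Prop :=
  ∀ ε : ℝ≥0∞, 0 < ε → ∃ T : Set (X → ℝ), T.Finite ∧ ∀ ω ∈ Ω, ∃ τ ∈ T, supDist ω τ < ε

/-!
Approximate Ω within δ by a finite family T of bounded functions. Then
`D_Ω ≤ D_T + 2δ`, and `x ↦ (τ x)_{τ ∈ T}` is an isometry of `(X, D_T)` into a bounded box of
`ℝ^T` with the sup metric, so `(X, D_T)` is totally bounded and its finite δ-nets are
3δ-nets for `D_Ω`.
-/

open Set

lemma edist_le_supDist (f g : X → ℝ) (x : X) : edist (f x) (g x) ≤ supDist f g :=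
  le_iSup (fun x => edist (f x) (g x)) x

lemma Bdd.of_supDist_ne_top {f g : X → ℝ} (hf : Bdd f) (hfg : supDist f g ≠ ⊤) : Bdd g := by
  obtain ⟨C, hC⟩ := hf
  refine ⟨C + (supDist f g).toReal, fun x => ?_⟩
  have hdist : dist (f x) (g x) ≤ (supDist f g).toReal := by
    rw [dist_edist]
    exact ENNReal.toReal_mono hfg (edist_le_supDist f g x)
  have := abs_sub_abs_le_abs_sub (g x) (f x)
  rw [← Real.dist_eq, dist_comm] at this
  linarith [hC x]

lemma TotBddFns.exists_finite_bdd_net {Ω : Set (X → ℝ)} (h : TotBddFns Ω)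
    (hb : ∀ ω ∈ Ω, Bdd ω) {δ : ℝ≥0∞} (hδ : 0 < δ) :
    ∃ T : Set (X → ℝ), T.Finite ∧ (∀ τ ∈ T, Bdd τ) ∧ ∀ ω ∈ Ω, ∃ τ ∈ T, supDist ω τ ≤ δ := by
  obtain ⟨T, hTfin, hT⟩ := h δ hδ
  refine ⟨{τ ∈ T | Bdd τ}, hTfin.subset (sep_subset _ _), fun τ hτ => hτ.2, fun ω hω => ?_⟩
  obtain ⟨τ, hτT, hωτ⟩ := hT ω hω
  exact ⟨τ, ⟨hτT, (hb ω hω).of_supDist_ne_top (ne_top_of_lt hωτ)⟩, hωτ.le⟩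

lemma DX_le_of_forall_supDist_le {Ω T : Set (X → ℝ)} {δ : ℝ≥0∞}
    (hT : ∀ ω ∈ Ω, ∃ τ ∈ T, supDist ω τ ≤ δ) (x y : X) :
    DX Ω x y ≤ δ + DX T x y + δ := by
  refine iSup₂_le fun ω hω => ?_
  obtain ⟨τ, hτT, hωτ⟩ := hT ω hω
  calc edist (ω x) (ω y)
      ≤ edist (ω x) (τ x) + edist (τ x) (τ y) + edist (τ y) (ω y) := edist_triangle4 _ _ _ _
    _ ≤ δ + DX T x y + δ := by
      gcongr
      · exact (edist_le_supDist ω τ x).trans hωτ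
      · exact le_iSup₂ (f := fun τ (_ : τ ∈ T) => edist (τ x) (τ y)) τ hτT
      · rw [edist_comm]
        exact (edist_le_supDist ω τ y).trans hωτ

lemma DX_eq_edist_eval (T : Set (X → ℝ)) [Fintype T] (x y : X) :
    DX T x y = edist (fun τ : T => τ.1 x) (fun τ : T => τ.1 y) := by
  rw [edist_pi_def, Finset.sup_univ_eq_iSup, DX, iSup_subtype']

lemma totallyBounded_DX_of_finite {T : Set (X → ℝ)} (hT : T.Finite) (hbdd : ∀ τ ∈ T, Bdd τ) :
    @TotallyBounded X (pemX T).toUniformSpace univ := by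
  let _ := pemX T
  have := hT.fintype
  let F : X → (T → ℝ) := fun x τ => τ.1 x
  have hF : Isometry F := fun x y => (DX_eq_edist_eval T x y).symm
  choose C hC using fun τ : T => hbdd τ τ.2
  have hbox : range F ⊆ univ.pi fun τ => Icc (-C τ) (C τ) := by
    rintro _ ⟨x, rfl⟩ τ -
    exact abs_le.1 (hC τ x)
  have hrange : TotallyBounded (range F) :=
    (isCompact_univ_pi fun τ => isCompact_Icc).totallyBounded.subset hbox
  simpa using totallyBounded_preimage hF.isUniformInducing hrange

theorem statement3 (Ω : Set (X → ℝ)) (hb : ∀ ω ∈ Ω, Bdd ω) (h : TotBddFns Ω) :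
    @TotallyBounded X (pemX Ω).toUniformSpace Set.univ := by
  let _ := pemX Ω
  refine EMetric.totallyBounded_iff.2 fun ε hε => ?_
  obtain ⟨δ, hδ, hδε⟩ := ENNReal.exists_pos_mul_lt (a := 3) (by simp) hε.ne'
  obtain ⟨T, hTfin, hTbdd, hT⟩ := h.exists_finite_bdd_net hb hδ
  obtain ⟨S, hSfin, hS⟩ :=
    (@EMetric.totallyBounded_iff X (pemX T) univ).1 (totallyBounded_DX_of_finite hTfin hTbdd) δ hδ
  refine ⟨S, hSfin, fun x _ => ?_⟩
  obtain ⟨s, hs, hxs⟩ := mem_iUnion₂.1 (hS (mem_univ x))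
  refine mem_iUnion₂.2 ⟨s, hs, ?_⟩
  calc DX Ω x s ≤ δ + DX T x s + δ := DX_le_of_forall_supDist_le hT x s
    _ ≤ δ + δ + δ := by gcongr; exact le_of_lt hxs
    _ = δ * 3 := by ring
    _ < ε := hδε
end

section
/- If Ω ⊆ ℝ_b^X is totally bounded and the pseudo-metric space X_Ω = (X, D_X^Ω) is complete, then X_Ω is compact. -/
open scoped ENNReal

variable {X : Type*}

theorem statement5 (Ω : Set (X → ℝ)) (hb : ∀ ω ∈ Ω, Bdd ω) (h : TotBddFns Ω)
    (hc : @CompleteSpace X (pemX Ω).toUniformSpace) :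
    @CompactSpace X (pemX Ω).toUniformSpace.toTopologicalSpace := by
  letI : PseudoEMetricSpace X := pemX Ω
  rcases isEmpty_or_nonempty X with hX | hX
  · exact ⟨by simp [Set.univ_eq_empty_iff.mpr hX]⟩
  rw [← isCompact_univ_iff, isCompact_iff_totallyBounded_isComplete]
  refine ⟨?_, completeSpace_iff_isComplete_univ.mp hc⟩
  rw [EMetric.totallyBounded_iff]
  intro ε hε
  -- choose a convenient δ with 4 * δ ≤ ε
  obtain ⟨δ, hδ0, hδtop, hδε⟩ : ∃ δ : ℝ≥0∞, 0 < δ ∧ δ ≠ ∞ ∧ 4 * δ ≤ ε := by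
    rcases eq_or_ne ε ∞ with rfl | hεtop
    · exact ⟨1, one_pos, ENNReal.one_ne_top, le_top⟩
    · exact ⟨ε / 4, ENNReal.div_pos hε.ne' (by norm_num),
        (ENNReal.div_lt_top hεtop (by norm_num)).ne, ENNReal.mul_div_le⟩
  obtain ⟨T, hTfin, hT⟩ := h δ hδ0
  -- the useful part of the net
  set T' : Set (X → ℝ) := {τ ∈ T | ∃ ω ∈ Ω, supDist ω τ < δ} with hT'
  have hT'fin : T'.Finite := hTfin.subset (Set.sep_subset _ _)
  haveI : Fintype ↥T' := hT'fin.fintype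
  -- every element of T' is bounded
  have hbdd : ∀ i : ↥T', ∃ B : ℝ, ∀ x, |(i : X → ℝ) x| ≤ B := by
    rintro ⟨τ, hτT, ω, hω, hsup⟩
    obtain ⟨C, hC⟩ := hb ω hω
    rw [supDist] at hsup
    refine ⟨C + δ.toReal, fun x => ?_⟩
    have h1 : edist (ω x) (τ x) ≤ δ := le_of_lt (lt_of_le_of_lt (le_iSup (fun x => edist (ω x) (τ x)) x) hsup)
    have h2 : dist (ω x) (τ x) ≤ δ.toReal := by
      rw [edist_dist] at h1
      exact (ENNReal.ofReal_le_iff_le_toReal hδtop).mp h1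
    calc |τ x| ≤ |ω x| + |τ x - ω x| := by
          have := abs_sub_abs_le_abs_sub (τ x) (ω x); linarith [abs_nonneg (τ x - ω x)]
      _ ≤ C + δ.toReal := by
          have h3 : |τ x - ω x| = dist (ω x) (τ x) := by rw [Real.dist_eq, abs_sub_comm]
          rw [h3]; exact add_le_add (hC x) h2
  choose B hB using hbdd
  -- the evaluation map into a compact cube
  set F : X → (↥T' → ℝ) := fun x i => (i : X → ℝ) x with hF
  have hK : IsCompact (Set.univ.pi fun i : ↥T' => Set.Icc (-(B i)) (B i)) :=
    isCompact_univ_pi fun i => isCompact_Icc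
  have hFK : Set.range F ⊆ Set.univ.pi fun i : ↥T' => Set.Icc (-(B i)) (B i) := by
    rintro _ ⟨x, rfl⟩ i _
    exact abs_le.mp (hB i x)
  have hTB : TotallyBounded (Set.range F) := hK.totallyBounded.subset hFK
  -- extract a finite δ-net inside the range, with representatives in X
  obtain ⟨t, hts, htfin, htcov⟩ :=
    totallyBounded_iff_subset.mp hTB _ (edist_mem_uniformity hδ0)
  have hsel : ∀ y ∈ t, ∃ x : X, F x = y := fun y hy => hts hy
  choose! g hg using hsel
  refine ⟨g '' t, htfin.image g, fun x _ => ?_⟩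
  obtain ⟨_, ⟨y, rfl⟩, _, ⟨hy, rfl⟩, hxy⟩ := htcov (Set.mem_range_self x)
  have hxy' : edist (F x) y < δ := hxy
  refine Set.mem_iUnion₂.mpr ⟨g y, Set.mem_image_of_mem g hy, ?_⟩
  have key : DX Ω x (g y) ≤ 3 * δ := by
    refine iSup₂_le fun ω hω => ?_
    obtain ⟨τ, hτT, hsup⟩ := hT ω hω
    have hτT' : τ ∈ T' := ⟨hτT, ω, hω, hsup⟩
    rw [supDist] at hsup
    set i : ↥T' := ⟨τ, hτT'⟩
    have h1 : edist (ω x) (τ x) ≤ δ := le_of_lt (lt_of_le_of_lt (le_iSup (fun x => edist (ω x) (τ x)) x) hsup)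
    have h3 : edist (τ (g y)) (ω (g y)) ≤ δ := by
      rw [edist_comm]
      exact le_of_lt (lt_of_le_of_lt (le_iSup (fun x => edist (ω x) (τ x)) (g y)) hsup)
    have h2 : edist (τ x) (τ (g y)) ≤ δ := by
      have h4 : edist (F x i) (F (g y) i) ≤ edist (F x) (F (g y)) :=
        edist_le_pi_edist (F x) (F (g y)) i
      have h5 : edist (F x) (F (g y)) < δ := by rw [hg y hy]; exact hxy'
      exact le_of_lt (lt_of_le_of_lt h4 h5)
    calc edist (ω x) (ω (g y))
        ≤ edist (ω x) (τ x) + edist (τ x) (τ (g y)) + edist (τ (g y)) (ω (g y)) :=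
          edist_triangle4 _ _ _ _
      _ ≤ δ + δ + δ := add_le_add (add_le_add h1 h2) h3
      _ = 3 * δ := by ring
  have h34 : (3 : ℝ≥0∞) * δ < 4 * δ :=
    by have := ENNReal.mul_lt_mul_right hδ0.ne' hδtop (show (3 : ℝ≥0∞) < 4 by norm_num)
       rwa [mul_comm δ, mul_comm δ] at this
  exact EMetric.mem_ball.mpr (lt_of_lt_of_le (lt_of_le_of_lt key h34) hδε)
end

section
/- If Φ and Φ' are totally bounded subsets of ℝ_b^X with the sup norm, then (Aut_{Φ,Φ'}(X), D_Aut^Φ) is totally bounded. -/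
open scoped ENNReal

variable {X : Type*}

lemma supDist_comm' (f g : X → ℝ) : supDist f g = supDist g f := by
  simp [supDist, edist_comm]

lemma supDist_triangle' (f g h : X → ℝ) : supDist f h ≤ supDist f g + supDist g h := by
  refine iSup_le fun x => le_trans (edist_triangle _ (g x) _) (add_le_add ?_ ?_)
  · exact le_iSup (fun x => edist (f x) (g x)) x
  · exact le_iSup (fun x => edist (g x) (h x)) x

lemma supDist_comp_le' (f g : X → ℝ) (s : X → X) : supDist (f ∘ s) (g ∘ s) ≤ supDist f g :=
  iSup_le fun x => le_iSup (fun y => edist (f y) (g y)) (s x)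

/-- A totally bounded family admits nets inside itself. -/
lemma totBddFns_net_subset {Ω : Set (X → ℝ)} (h : TotBddFns Ω) (δ : ℝ≥0∞) (hδ : 0 < δ)
    (hδt : δ ≠ ⊤) :
    ∃ T : Set (X → ℝ), T ⊆ Ω ∧ T.Finite ∧ ∀ ω ∈ Ω, ∃ τ ∈ T, supDist ω τ < δ := by
  classical
  obtain ⟨T₀, hT₀fin, hT₀⟩ := h (δ / 2) (ENNReal.half_pos hδ.ne')
  set c : (X → ℝ) → (X → ℝ) := fun τ =>
    if h : ∃ ω ∈ Ω, supDist ω τ < δ / 2 then h.choose else 0 with hc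
  refine ⟨c '' {τ ∈ T₀ | ∃ ω ∈ Ω, supDist ω τ < δ / 2}, ?_, ?_, ?_⟩
  · rintro _ ⟨τ, ⟨-, hτ⟩, rfl⟩
    simp only [hc, dif_pos hτ]
    exact hτ.choose_spec.1
  · exact (hT₀fin.subset (Set.sep_subset _ _)).image c
  · intro ω hω
    obtain ⟨τ, hτT, hτ⟩ := hT₀ ω hω
    have hex : ∃ ω' ∈ Ω, supDist ω' τ < δ / 2 := ⟨ω, hω, hτ⟩
    refine ⟨c τ, ⟨τ, ⟨hτT, hex⟩, rfl⟩, ?_⟩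
    have h2 : supDist (c τ) τ < δ / 2 := by
      simp only [hc, dif_pos hex]; exact hex.choose_spec.2
    calc supDist ω (c τ) ≤ supDist ω τ + supDist τ (c τ) := supDist_triangle' _ _ _
      _ < δ / 2 + δ / 2 := ENNReal.add_lt_add hτ (by rwa [supDist_comm'])
      _ = δ := ENNReal.add_halves δ

theorem statement15 (Φ Φ' : Set (X → ℝ)) (hbΦ : ∀ φ ∈ Φ, Bdd φ) (hbΦ' : ∀ φ ∈ Φ', Bdd φ)
    (h1 : TotBddFns Φ) (h2 : TotBddFns Φ') :
    @TotallyBounded (X ≃ X) (pemAut Φ).toUniformSpace {s : X ≃ X | IsOperation Φ Φ' s} := by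
  classical
  letI : PseudoEMetricSpace (X ≃ X) := pemAut Φ
  rw [EMetric.totallyBounded_iff]
  intro ε hε
  set δ : ℝ≥0∞ := min ε 1 / 5 with hδdef
  have hδpos : 0 < δ := ENNReal.div_pos (lt_min hε zero_lt_one).ne' (by norm_num)
  have hδne : δ ≠ ⊤ :=
    (ENNReal.div_le_div_right (min_le_right ε 1) 5).trans_lt (by norm_num) |>.ne
  have h5δ : 5 * δ ≤ ε := by
    rw [hδdef, ENNReal.mul_div_cancel' (by norm_num) (by norm_num)]
    exact min_le_left ε 1
  have h4δ : 4 * δ < ε := by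
    refine lt_of_lt_of_le ?_ h5δ
    rw [mul_comm 4 δ, mul_comm 5 δ]
    exact ENNReal.mul_lt_mul_right hδpos.ne' hδne (by norm_num)
  obtain ⟨T, hTΦ, hTfin, hT⟩ := totBddFns_net_subset h1 δ hδpos hδne
  obtain ⟨T', hT'fin, hT'⟩ := h2 δ hδpos
  set S : Set (X ≃ X) := {s : X ≃ X | IsOperation Φ Φ' s} with hSdef
  -- signature map
  set F : (X ≃ X) → (X → ℝ) → (X → ℝ) := fun s τ =>
    if h : ∃ τ' ∈ T', supDist (τ ∘ s) τ' < δ then h.choose else 0 with hF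
  have hFspec : ∀ s ∈ S, ∀ τ ∈ T, F s τ ∈ T' ∧ supDist (τ ∘ s) (F s τ) < δ := by
    intro s hs τ hτ
    have hex : ∃ τ' ∈ T', supDist (τ ∘ s) τ' < δ := hT' (τ ∘ s) (hs τ (hTΦ hτ))
    simp only [hF, dif_pos hex]
    exact ⟨hex.choose_spec.1, hex.choose_spec.2⟩
  set G : (X ≃ X) → (↥T → X → ℝ) := fun s τ => F s τ.1 with hG
  haveI : Finite ↥T := hTfin.to_subtype
  have hGim : (G '' S).Finite := by
    refine Set.Finite.subset (Set.Finite.pi fun _ : ↥T => hT'fin.insert 0) ?_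
    rintro _ ⟨s, hs, rfl⟩
    intro τ _
    by_cases hsS : s ∈ S
    · exact Set.mem_insert_of_mem _ (hFspec s hsS τ.1 τ.2).1
    · exact absurd hs hsS
  set rep : (↥T → X → ℝ) → (X ≃ X) := fun g =>
    if h : ∃ s ∈ S, G s = g then h.choose else Equiv.refl X with hrep
  refine ⟨rep '' (G '' S), hGim.image rep, ?_⟩
  intro s hs
  have hgex : ∃ s' ∈ S, G s' = G s := ⟨s, hs, rfl⟩
  set t := rep (G s) with ht
  have htspec : t ∈ S ∧ G t = G s := by
    simp only [ht, hrep, dif_pos hgex]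
    exact ⟨hgex.choose_spec.1, hgex.choose_spec.2⟩
  refine Set.mem_iUnion₂.2 ⟨t, ⟨G s, ⟨s, hs, rfl⟩, rfl⟩, ?_⟩
  -- show edist s t < ε
  show edist s t < ε
  have hedist : edist s t = DAut Φ s t := rfl
  rw [hedist]
  refine lt_of_le_of_lt (iSup₂_le fun φ hφ => ?_) h4δ
  obtain ⟨τ, hτT, hτ⟩ := hT φ hφ
  have h1' : supDist (φ ∘ s) (τ ∘ s) ≤ supDist φ τ := supDist_comp_le' _ _ _
  have h2' : supDist (τ ∘ s) (F s τ) < δ := (hFspec s hs τ hτT).2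
  have h3' : supDist (F s τ) (τ ∘ t) < δ := by
    have hFeq : F t τ = F s τ := congrFun htspec.2 ⟨τ, hτT⟩
    rw [← hFeq, supDist_comm']
    exact (hFspec t htspec.1 τ hτT).2
  have h4' : supDist (τ ∘ t) (φ ∘ t) ≤ supDist τ φ := supDist_comp_le' _ _ _
  calc supDist (φ ∘ s) (φ ∘ t)
      ≤ supDist (φ ∘ s) (τ ∘ s) + supDist (τ ∘ s) (φ ∘ t) := supDist_triangle' _ _ _
    _ ≤ supDist (φ ∘ s) (τ ∘ s) +
        (supDist (τ ∘ s) (F s τ) + supDist (F s τ) (φ ∘ t)) :=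
        add_le_add le_rfl (supDist_triangle' _ _ _)
    _ ≤ supDist (φ ∘ s) (τ ∘ s) + (supDist (τ ∘ s) (F s τ) +
        (supDist (F s τ) (τ ∘ t) + supDist (τ ∘ t) (φ ∘ t))) :=
        add_le_add le_rfl (add_le_add le_rfl (supDist_triangle' _ _ _))
    _ ≤ δ + (δ + (δ + δ)) := by
        exact add_le_add (h1'.trans hτ.le) (add_le_add h2'.le
          (add_le_add h3'.le (h4'.trans (by rw [supDist_comm']; exact hτ.le))))
    _ = 4 * δ := by ring
end

section
/- Let (F₁,F₁'),…,(Fₙ,Fₙ') be P-GENEOs from (Φ,Φ',S) to (Ψ,Ψ',Q) with respect to T, and let L : ℝⁿ → ℝ be non-expansive with respect to the max norm on ℝⁿ. Define L*(F₁,…,Fₙ)(φ)(y) = L(F₁(φ)(y),…,Fₙ(φ)(y)) and similarly for the primed operators. If L*(F₁,…,Fₙ)(Φ) ⊆ Ψ and L*(F₁',…,Fₙ')(Φ') ⊆ Ψ', then the pair (L*(F₁,…,Fₙ), L*(F₁',…,Fₙ')) is a P-GENEO with respect to T. -/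
open scoped ENNReal

variable {X : Type*}

/-- The pair (F, F') is a P-GENEO with respect to the map T. -/
def IsPGENEOPair {X Y : Type*} (Φ Φ' : Set (X → ℝ)) (S : Set (X ≃ X))
    (Ψ Ψ' : Set (Y → ℝ)) (T : (X ≃ X) → (Y ≃ Y))
    (F F' : (X → ℝ) → (Y → ℝ)) : Prop :=
  (∀ φ ∈ Φ, F φ ∈ Ψ) ∧ (∀ φ ∈ Φ', F' φ ∈ Ψ') ∧
  (∀ φ₁ ∈ Φ, ∀ φ₂ ∈ Φ, supDist (F φ₁) (F φ₂) ≤ supDist φ₁ φ₂) ∧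
  (∀ φ₁ ∈ Φ', ∀ φ₂ ∈ Φ', supDist (F' φ₁) (F' φ₂) ≤ supDist φ₁ φ₂) ∧
  (∀ φ ∈ Φ, ∀ s ∈ S, F' (φ ∘ s) = F φ ∘ T s)

/-- The operator L*(F₁,…,Fₙ) built from an n-tuple of operators via L. -/
noncomputable def LStar {X Y : Type*} {n : ℕ} (L : (Fin n → ℝ) → ℝ)
    (F : Fin n → (X → ℝ) → (Y → ℝ)) : (X → ℝ) → (Y → ℝ) :=
  fun φ y => L fun i => F i φ y

lemma LStar_nonexp {X Y : Type*} {n : ℕ} (L : (Fin n → ℝ) → ℝ)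
    (hL : ∀ a b : Fin n → ℝ, |L a - L b| ≤ ‖a - b‖)
    (G : Fin n → (X → ℝ) → (Y → ℝ)) (φ₁ φ₂ : X → ℝ)
    (hG : ∀ i, supDist (G i φ₁) (G i φ₂) ≤ supDist φ₁ φ₂) :
    supDist (LStar L G φ₁) (LStar L G φ₂) ≤ supDist φ₁ φ₂ := by
  refine iSup_le fun y => ?_
  set a : Fin n → ℝ := fun i => G i φ₁ y
  set b : Fin n → ℝ := fun i => G i φ₂ y
  have h1 : edist (LStar L G φ₁ y) (LStar L G φ₂ y) ≤ edist a b := by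
    rw [edist_dist, edist_dist]
    exact ENNReal.ofReal_le_ofReal (by rw [Real.dist_eq, dist_eq_norm]; exact hL a b)
  refine h1.trans ?_
  rw [edist_pi_def]
  refine Finset.sup_le fun i _ => ?_
  calc edist (a i) (b i) ≤ supDist (G i φ₁) (G i φ₂) :=
        le_iSup (fun y => edist (G i φ₁ y) (G i φ₂ y)) y
    _ ≤ supDist φ₁ φ₂ := hG i

theorem statement18 {Y : Type*} (Φ Φ' : Set (X → ℝ)) (S : Set (X ≃ X))
    (Ψ Ψ' : Set (Y → ℝ)) (T : (X ≃ X) → (Y ≃ Y)) {n : ℕ}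
    (F F' : Fin n → (X → ℝ) → (Y → ℝ))
    (h : ∀ i, IsPGENEOPair Φ Φ' S Ψ Ψ' T (F i) (F' i))
    (L : (Fin n → ℝ) → ℝ) (hL : ∀ a b : Fin n → ℝ, |L a - L b| ≤ ‖a - b‖)
    (h1 : ∀ φ ∈ Φ, LStar L F φ ∈ Ψ) (h2 : ∀ φ ∈ Φ', LStar L F' φ ∈ Ψ') :
    IsPGENEOPair Φ Φ' S Ψ Ψ' T (LStar L F) (LStar L F') := by
  refine ⟨h1, h2, ?_, ?_, ?_⟩
  · exact fun φ₁ h₁ φ₂ h₂ =>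
      LStar_nonexp L hL F φ₁ φ₂ fun i => (h i).2.2.1 φ₁ h₁ φ₂ h₂
  · exact fun φ₁ h₁ φ₂ h₂ =>
      LStar_nonexp L hL F' φ₁ φ₂ fun i => (h i).2.2.2.1 φ₁ h₁ φ₂ h₂
  · intro φ hφ s hs
    funext y
    simp only [LStar, Function.comp_apply]
    congr 1
    funext i
    have := (h i).2.2.2.2 φ hφ s hs
    exact congrFun this y
end

section
/- If Ψ and Ψ' are convex subsets of ℝ_b^Y, then the set of all P-GENEOs from (Φ,Φ',S) to (Ψ,Ψ',Q) with respect to a fixed map T is convex: for P-GENEOs (F₁,F₁'),…,(Fₙ,Fₙ') and nonnegative reals a₁,…,aₙ summing to 1, the pair (Σᵢ aᵢFᵢ, Σᵢ aᵢFᵢ') (defined pointwise) is again a P-GENEO with respect to T. -/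
open scoped ENNReal

variable {X : Type*}

lemma supDist_sum_le {Z : Type*} {n : ℕ} (f g : Fin n → Z → ℝ) (a : Fin n → ℝ)
    (ha : ∀ i, 0 ≤ a i) (hsum : ∑ i, a i = 1) (D : ℝ≥0∞)
    (hD : ∀ i, supDist (f i) (g i) ≤ D) :
    supDist (fun x => ∑ i, a i * f i x) (fun x => ∑ i, a i * g i x) ≤ D := by
  refine iSup_le fun x => ?_
  have h1 : edist (∑ i, a i * f i x) (∑ i, a i * g i x)
      ≤ ∑ i, (‖a i‖₊ : ℝ≥0∞) * edist (f i x) (g i x) := by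
    rw [edist_eq_enorm_sub, ← Finset.sum_sub_distrib]
    calc (‖∑ i, (a i * f i x - a i * g i x)‖₊ : ℝ≥0∞)
        ≤ ∑ i, (‖a i * f i x - a i * g i x‖₊ : ℝ≥0∞) := by
          exact_mod_cast ENNReal.coe_le_coe.2 (nnnorm_sum_le _ _)
      _ = ∑ i, (‖a i‖₊ : ℝ≥0∞) * edist (f i x) (g i x) := by
          refine Finset.sum_congr rfl fun i _ => ?_
          rw [edist_eq_enorm_sub, ← mul_sub, nnnorm_mul, enorm_eq_nnnorm]
          push_cast; ring
  refine h1.trans ?_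
  have h2 : ∑ i, (‖a i‖₊ : ℝ≥0∞) * edist (f i x) (g i x)
      ≤ ∑ i, (‖a i‖₊ : ℝ≥0∞) * D := by
    refine Finset.sum_le_sum fun i _ => mul_le_mul_right ?_ _
    exact le_trans (le_iSup (fun x => edist (f i x) (g i x)) x) (hD i)
  refine h2.trans ?_
  rw [← Finset.sum_mul]
  have h3 : (∑ i, (‖a i‖₊ : ℝ≥0∞)) = 1 := by
    have : ∀ i : Fin n, (‖a i‖₊ : ℝ≥0∞) = ENNReal.ofReal (a i) := by
      intro i
      exact Real.enorm_eq_ofReal (ha i)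
    rw [Finset.sum_congr rfl fun i _ => this i, ← ENNReal.ofReal_sum_of_nonneg
      (fun i _ => ha i), hsum, ENNReal.ofReal_one]
  rw [h3, one_mul]

lemma sum_mul_mem {Z : Type*} {n : ℕ} {Ψ : Set (Z → ℝ)} (hΨ : Convex ℝ Ψ)
    (f : Fin n → Z → ℝ) (hf : ∀ i, f i ∈ Ψ) (a : Fin n → ℝ)
    (ha : ∀ i, 0 ≤ a i) (hsum : ∑ i, a i = 1) :
    (fun y => ∑ i, a i * f i y) ∈ Ψ := by
  have := hΨ.sum_mem (t := Finset.univ) (fun i _ => ha i) hsum (fun i _ => hf i)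
  convert this using 1
  funext y
  simp [Finset.sum_apply, Pi.smul_apply, smul_eq_mul]

theorem statement19 {Y : Type*} (Φ Φ' : Set (X → ℝ)) (S : Set (X ≃ X))
    (Ψ Ψ' : Set (Y → ℝ)) (T : (X ≃ X) → (Y ≃ Y))
    (hΨ : Convex ℝ Ψ) (hΨ' : Convex ℝ Ψ') {n : ℕ}
    (F F' : Fin n → (X → ℝ) → (Y → ℝ))
    (h : ∀ i, IsPGENEOPair Φ Φ' S Ψ Ψ' T (F i) (F' i))
    (a : Fin n → ℝ) (ha : ∀ i, 0 ≤ a i) (hsum : ∑ i, a i = 1) :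
    IsPGENEOPair Φ Φ' S Ψ Ψ' T
      (fun φ y => ∑ i, a i * F i φ y) (fun φ y => ∑ i, a i * F' i φ y) := by
  refine ⟨fun φ hφ => sum_mul_mem hΨ _ (fun i => (h i).1 φ hφ) a ha hsum,
    fun φ hφ => sum_mul_mem hΨ' _ (fun i => (h i).2.1 φ hφ) a ha hsum,
    fun φ₁ h₁ φ₂ h₂ => supDist_sum_le _ _ a ha hsum _
      (fun i => (h i).2.2.1 φ₁ h₁ φ₂ h₂),
    fun φ₁ h₁ φ₂ h₂ => supDist_sum_le _ _ a ha hsum _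
      (fun i => (h i).2.2.2.1 φ₁ h₁ φ₂ h₂),
    fun φ hφ s hs => ?_⟩
  funext y
  simp only [Function.comp_apply]
  refine Finset.sum_congr rfl fun i _ => ?_
  rw [(h i).2.2.2.2 φ hφ s hs]
  rfl
end
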